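/- Let A be a nonempty finite set, let p : A → ℝ be a probability vector, and let ℓ : A → [0,1] be a likelihood function. Set Z₁ = ∑_{a∈A} ℓ(a)·p(a) and Z₀ = 1 − Z₁, and assume 0 < Z₁ < 1. If there exist a, b ∈ A with p(a) > 0, p(b) > 0 and ℓ(a) ≠ ℓ(b), then Z₁·H(p⁺) + Z₀·H(p⁻) < H(p); equivalently, EER > 0. -/
import Mathlib


open Finset

/-- Shannon entropy (in bits) of a finitely supported probability vector,
with the convention `0 · log₂ 0 = 0` (automatic since `Real.logb 2 0 = 0`). -/
noncomputable def shannonEntropy {A : Type*} [Fintype A] (p : A → ℝ) : ℝ :=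
  -∑ a, p a * Real.logb 2 (p a)

/-- Binary KL divergence (base 2) of `t` against `z`. -/
noncomputable def klBin (z t : ℝ) : ℝ :=
  t * Real.logb 2 (t / z) + (1 - t) * Real.logb 2 ((1 - t) / (1 - z))

lemma klBin_pos {z t : ℝ} (hz0 : 0 < z) (hz1 : z < 1)
    (ht0 : 0 ≤ t) (ht1 : t ≤ 1) (hne : t ≠ z) : 0 < klBin z t := by
  have hz0' : (0:ℝ) < 1 - z := by linarith
  rcases eq_or_lt_of_le ht0 with h0 | h0
  · -- t = 0
    have : klBin z t = Real.logb 2 (1 / (1 - z)) := by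
      simp [klBin, ← h0]
    rw [this]
    exact Real.logb_pos one_lt_two (one_lt_one_div hz0' (by linarith))
  rcases eq_or_lt_of_le ht1 with h1 | h1
  · -- t = 1
    have : klBin z t = Real.logb 2 (1 / z) := by
      simp [klBin, h1]
    rw [this]
    exact Real.logb_pos one_lt_two (one_lt_one_div hz0 hz1)
  -- 0 < t < 1
  have ht0' : (0:ℝ) < 1 - t := by linarith
  have hlog2 : (0:ℝ) < Real.log 2 := Real.log_pos one_lt_two
  have key : 0 < t * Real.log (t / z) + (1 - t) * Real.log ((1 - t) / (1 - z)) := by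
    have hA : Real.log (z / t) < z / t - 1 :=
      Real.log_lt_sub_one_of_pos (div_pos hz0 h0)
        (by intro h; apply hne; field_simp at h; linarith)
    have hB : Real.log ((1 - z) / (1 - t)) < (1 - z) / (1 - t) - 1 :=
      Real.log_lt_sub_one_of_pos (div_pos hz0' ht0')
        (by intro h; apply hne; field_simp at h; linarith)
    have e1 : Real.log (t / z) = - Real.log (z / t) := by
      rw [Real.log_div (ne_of_gt h0) (ne_of_gt hz0),
        Real.log_div (ne_of_gt hz0) (ne_of_gt h0)]; ring
    have e2 : Real.log ((1 - t) / (1 - z)) = - Real.log ((1 - z) / (1 - t)) := by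
      rw [Real.log_div (ne_of_gt ht0') (ne_of_gt hz0'),
        Real.log_div (ne_of_gt hz0') (ne_of_gt ht0')]; ring
    rw [e1, e2]
    have hA' : t * Real.log (z / t) < z - t := by
      have := (mul_lt_mul_iff_right₀ h0).2 hA
      have e : t * (z / t - 1) = z - t := by field_simp
      linarith [e ▸ this]
    have hB' : (1 - t) * Real.log ((1 - z) / (1 - t)) < (1 - z) - (1 - t) := by
      have := (mul_lt_mul_iff_right₀ ht0').2 hB
      have e : (1 - t) * ((1 - z) / (1 - t) - 1) = (1 - z) - (1 - t) := by field_simp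
      linarith [e ▸ this]
    nlinarith
  unfold klBin Real.logb
  have : t * (Real.log (t / z) / Real.log 2) + (1 - t) * (Real.log ((1 - t) / (1 - z)) / Real.log 2)
      = (t * Real.log (t / z) + (1 - t) * Real.log ((1 - t) / (1 - z))) / Real.log 2 := by ring
  rw [this]
  exact div_pos key hlog2

lemma klBin_nonneg {z t : ℝ} (hz0 : 0 < z) (hz1 : z < 1)
    (ht0 : 0 ≤ t) (ht1 : t ≤ 1) : 0 ≤ klBin z t := by
  by_cases h : t = z
  · have : klBin z t = 0 := by
      simp [klBin, h, div_self (ne_of_gt hz0),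
        div_self (show (1:ℝ) - z ≠ 0 by linarith)]
    simp [this]
  · exact le_of_lt (klBin_pos hz0 hz1 ht0 ht1 h)

lemma aux_log_split {t P Z : ℝ} (ht : 0 ≤ t) (hP : 0 ≤ P) (hZ : 0 < Z) :
    t * P * Real.logb 2 (t * P / Z) =
      P * (t * Real.logb 2 (t / Z)) + t * P * Real.logb 2 P := by
  rcases eq_or_lt_of_le ht with h | h
  · simp [← h]
  rcases eq_or_lt_of_le hP with h' | h'
  · simp [← h']
  have : t * P / Z = (t / Z) * P := by ring
  rw [this, Real.logb_mul (by positivity) (ne_of_gt h')]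
  ring

/--
**Discriminative claims yield strictly positive EER.**
Let `A` be a nonempty finite set, `p` a probability vector on `A`, and
`ℓ : A → [0,1]` a likelihood function.  Set `Z₁ = ∑ a, ℓ a * p a`,
`Z₀ = 1 - Z₁`, and assume `0 < Z₁ < 1`.  If there exist `a, b ∈ A` with
`p a > 0`, `p b > 0` and `ℓ a ≠ ℓ b`, then
`Z₁ · H(p⁺) + Z₀ · H(p⁻) < H(p)`, i.e. `EER > 0`.
-/
theorem eer_pos_of_discriminative {A : Type*} [Fintype A] [Nonempty A]
    (p ℓ : A → ℝ)
    (hp_nonneg : ∀ a, 0 ≤ p a) (hp_sum : ∑ a, p a = 1)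
    (hℓ : ∀ a, ℓ a ∈ Set.Icc (0 : ℝ) 1)
    (Z₁ Z₀ : ℝ) (hZ₁ : Z₁ = ∑ a, ℓ a * p a) (hZ₀ : Z₀ = 1 - Z₁)
    (hZ₁_pos : 0 < Z₁) (hZ₁_lt : Z₁ < 1)
    (hdisc : ∃ a b : A, 0 < p a ∧ 0 < p b ∧ ℓ a ≠ ℓ b) :
    Z₁ * shannonEntropy (fun a => ℓ a * p a / Z₁) +
      Z₀ * shannonEntropy (fun a => (1 - ℓ a) * p a / Z₀) <
    shannonEntropy p := by
  obtain ⟨a₀, b₀, hpa₀, hpb₀, hab⟩ := hdisc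
  have hZ₀_pos : 0 < Z₀ := by rw [hZ₀]; linarith
  have hZ₀_eq : Z₀ = 1 - Z₁ := hZ₀
  -- termwise identity
  have key : ∀ a : A,
      ℓ a * p a * Real.logb 2 (ℓ a * p a / Z₁) +
      (1 - ℓ a) * p a * Real.logb 2 ((1 - ℓ a) * p a / Z₀) -
      p a * Real.logb 2 (p a) = p a * klBin Z₁ (ℓ a) := by
    intro a
    obtain ⟨hℓ0, hℓ1⟩ := hℓ a
    have h1 := aux_log_split hℓ0 (hp_nonneg a) hZ₁_pos
    have h2 := aux_log_split (by linarith : (0:ℝ) ≤ 1 - ℓ a) (hp_nonneg a) hZ₀_pos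
    rw [h1, h2]
    unfold klBin
    rw [hZ₀_eq]
    ring
  -- expand the difference as a sum
  have expand : shannonEntropy p -
      (Z₁ * shannonEntropy (fun a => ℓ a * p a / Z₁) +
       Z₀ * shannonEntropy (fun a => (1 - ℓ a) * p a / Z₀)) =
      ∑ a, p a * klBin Z₁ (ℓ a) := by
    unfold shannonEntropy
    rw [mul_neg, mul_neg, Finset.mul_sum, Finset.mul_sum]
    have e1 : ∀ a : A, Z₁ * (ℓ a * p a / Z₁ * Real.logb 2 (ℓ a * p a / Z₁)) =
        ℓ a * p a * Real.logb 2 (ℓ a * p a / Z₁) := by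
      intro a; field_simp
    have e2 : ∀ a : A, Z₀ * ((1 - ℓ a) * p a / Z₀ * Real.logb 2 ((1 - ℓ a) * p a / Z₀)) =
        (1 - ℓ a) * p a * Real.logb 2 ((1 - ℓ a) * p a / Z₀) := by
      intro a; field_simp
    rw [Finset.sum_congr rfl (fun a _ => e1 a), Finset.sum_congr rfl (fun a _ => e2 a)]
    rw [← Finset.sum_congr rfl (fun a _ => key a)]
    rw [Finset.sum_sub_distrib, Finset.sum_add_distrib]
    ring
  -- positivity of the sum
  have hwit : ∃ a : A, 0 < p a ∧ ℓ a ≠ Z₁ := by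
    by_cases h : ℓ a₀ = Z₁
    · exact ⟨b₀, hpb₀, fun hc => hab (h.trans hc.symm)⟩
    · exact ⟨a₀, hpa₀, h⟩
  obtain ⟨c, hpc, hℓc⟩ := hwit
  have hpos : 0 < ∑ a, p a * klBin Z₁ (ℓ a) := by
    apply Finset.sum_pos'
    · intro a _
      exact mul_nonneg (hp_nonneg a)
        (klBin_nonneg hZ₁_pos hZ₁_lt (hℓ a).1 (hℓ a).2)
    · exact ⟨c, Finset.mem_univ c,
        mul_pos hpc (klBin_pos hZ₁_pos hZ₁_lt (hℓ c).1 (hℓ c).2 hℓc)⟩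
  linarith [expand ▸ hpos]
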